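/- If the sequential regression models Q̃₁ = Q₁ and Q̃₂ = Q₂ are correctly specified (while π̃_A, π̃_R may be arbitrary measurable functions with values in (0,1)), then E[D̃(O)] = 0 where D̃ is the EIF-based estimating function with true ψ plugged in. -/

import Mathlib

/-!
Write `D̃ = g T + h U + (Q₂(W,1) - Q₂(W,0) - ψ)` with `T = R (Y - Q₁)`, `U = Q₁ - Q₂`,
`g` a function of `(W,A,Z)` and `h` a function of `(W,A)`. Missing at random says
`E[T | W,A,Z] = 0`, and `Q₂ = E[Q₁ | W,A]` says `E[U | W,A] = 0`, so by the pull-out property each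
of the first two terms has mean zero, while the last has mean zero by the choice of `ψ`.
Only `D̃` itself is assumed integrable, so the pull-out step is done on the sets `{|g| ≤ n}`, where
`g` is bounded: this shows `E[g T + k | 𝒢] = k` for any `𝒢`-measurable `k`, in particular that
`k = h U` is integrable.
-/

open MeasureTheory

section PullOut

variable {Ω : Type*} {m m₀ : MeasurableSpace Ω} {μ : Measure Ω} {f g T k : Ω → ℝ}

theorem condExp_mul_add_ae_eq_of_bounded (hm : m ≤ m₀) [SigmaFinite (μ.trim hm)] {C : ℝ}
    (hg : AEStronglyMeasurable[m] g μ) (hgC : ∀ᵐ ω ∂μ, ‖g ω‖ ≤ C)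
    (hk : AEStronglyMeasurable[m] k μ) (hT : Integrable T μ) (hT₀ : μ[T | m] =ᵐ[μ] 0)
    (hS : Integrable (g * T + k) μ) :
    μ[g * T + k | m] =ᵐ[μ] k := by
  have hgT : Integrable (g * T) μ := hT.bdd_mul (hg.mono hm) hgC
  have hk_int : Integrable k μ := by simpa using hS.sub hgT
  filter_upwards [condExp_add hgT hk_int m, condExp_mul_of_aestronglyMeasurable_left hg hgT hT,
    hT₀, condExp_of_aestronglyMeasurable' hm hk hk_int] with ω hS hgT hT₀ hk
  simp [hS, hgT, hT₀, hk]

theorem condExp_mul_add_ae_eq (hm : m ≤ m₀) [SigmaFinite (μ.trim hm)]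
    (hg : StronglyMeasurable[m] g) (hk : AEStronglyMeasurable[m] k μ) (hT : Integrable T μ)
    (hT₀ : μ[T | m] =ᵐ[μ] 0) (hS : Integrable (g * T + k) μ) :
    μ[g * T + k | m] =ᵐ[μ] k := by
  set B : ℕ → Set Ω := fun n => {ω | ‖g ω‖ ≤ n}
  have hB : ∀ n, MeasurableSet[m] (B n) := fun n => hg.norm.measurable measurableSet_Iic
  have htrunc : ∀ n, (B n).indicator (μ[g * T + k | m]) =ᵐ[μ] (B n).indicator k := by
    intro n
    have hsplit : (B n).indicator (g * T + k) = (B n).indicator g * T + (B n).indicator k := by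
      ext ω
      by_cases hω : ω ∈ B n <;> simp [hω]
    have hbdd : ∀ᵐ ω ∂μ, ‖(B n).indicator g ω‖ ≤ n := ae_of_all _ fun ω => by
      by_cases hω : ω ∈ B n
      · rw [Set.indicator_of_mem hω]; exact hω
      · simp [hω]
    refine (condExp_indicator hS (hB n)).symm.trans ?_
    rw [hsplit]
    refine condExp_mul_add_ae_eq_of_bounded hm (hg.indicator (hB n)).aestronglyMeasurable hbdd
      ⟨_, hk.stronglyMeasurable_mk.indicator (hB n), hk.ae_eq_mk.indicator⟩ hT hT₀ ?_
    rw [← hsplit]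
    exact hS.indicator (hm _ (hB n))
  filter_upwards [ae_all_iff.2 htrunc] with ω hω
  obtain ⟨n, hn⟩ := exists_nat_ge ‖g ω‖
  have hmem : ω ∈ B n := hn
  simpa [Set.indicator_of_mem hmem] using hω n

theorem integral_mul_add_eq_integral (hm : m ≤ m₀) [SigmaFinite (μ.trim hm)]
    (hg : StronglyMeasurable[m] g) (hk : AEStronglyMeasurable[m] k μ) (hT : Integrable T μ)
    (hT₀ : μ[T | m] =ᵐ[μ] 0) (hS : Integrable (g * T + k) μ) :
    ∫ ω, (g * T + k) ω ∂μ = ∫ ω, k ω ∂μ :=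
  (integral_condExp hm).symm.trans (integral_congr_ae (condExp_mul_add_ae_eq hm hg hk hT hT₀ hS))

theorem integrable_of_integrable_mul_add (hm : m ≤ m₀) [SigmaFinite (μ.trim hm)]
    (hg : StronglyMeasurable[m] g) (hk : AEStronglyMeasurable[m] k μ) (hT : Integrable T μ)
    (hT₀ : μ[T | m] =ᵐ[μ] 0) (hS : Integrable (g * T + k) μ) :
    Integrable k μ :=
  integrable_condExp.congr (condExp_mul_add_ae_eq hm hg hk hT hT₀ hS)

theorem integral_mul_eq_zero (hm : m ≤ m₀) [SigmaFinite (μ.trim hm)]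
    (hg : StronglyMeasurable[m] g) (hT : Integrable T μ) (hT₀ : μ[T | m] =ᵐ[μ] 0)
    (hgT : Integrable (g * T) μ) :
    ∫ ω, (g * T) ω ∂μ = 0 := by
  simpa using integral_mul_add_eq_integral hm hg (k := 0) aestronglyMeasurable_zero hT hT₀
    (by simpa using hgT)

theorem condExp_sub_ae_eq_zero (hm : m ≤ m₀) [SigmaFinite (μ.trim hm)] (hf : Integrable f μ)
    (hg : g =ᵐ[μ] μ[f | m]) :
    μ[f - g | m] =ᵐ[μ] 0 := by
  have hg_int : Integrable g μ := integrable_condExp.congr hg.symm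
  filter_upwards [condExp_sub hf hg_int m, condExp_congr_ae (μ := μ) (m := m) hg,
    condExp_condExp_of_le le_rfl hm (f := f) (μ := μ)] with ω hsub hcongr htower
  simp [hsub, hcongr, htower]

end PullOut

theorem integral_mul_add_mul_eq_zero {Ω : Type*} {m₁ m₂ m₀ : MeasurableSpace Ω} {μ : Measure Ω}
    [IsFiniteMeasure μ] {g h T U : Ω → ℝ} (hm₁ : m₁ ≤ m₀) (hm₂₁ : m₂ ≤ m₁)
    (hg : StronglyMeasurable[m₁] g) (hh : StronglyMeasurable[m₂] h)
    (hT : Integrable T μ) (hT₀ : μ[T | m₁] =ᵐ[μ] 0)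
    (hU : AEStronglyMeasurable[m₁] U μ) (hU_int : Integrable U μ) (hU₀ : μ[U | m₂] =ᵐ[μ] 0)
    (hS : Integrable (g * T + h * U) μ) :
    ∫ ω, (g * T + h * U) ω ∂μ = 0 := by
  have hhU : AEStronglyMeasurable[m₁] (h * U) μ := (hh.mono hm₂₁).aestronglyMeasurable.mul hU
  rw [integral_mul_add_eq_integral hm₁ hg hhU hT hT₀ hS]
  exact integral_mul_eq_zero (hm₂₁.trans hm₁) hh hU_int hU₀
    (integrable_of_integrable_mul_add hm₁ hg hhU hT hT₀ hS)

theorem estimating_equation_robust_Q_general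
    (Ω 𝓦 𝓩 : Type*) [MeasurableSpace Ω] [MeasurableSpace 𝓦] [MeasurableSpace 𝓩]
    (μ : Measure Ω) [IsProbabilityMeasure μ]
    (W : Ω → 𝓦) (Z : Ω → 𝓩) (A R Y : Ω → ℝ)
    (hW : Measurable W) (hZ : Measurable Z) (hA : Measurable A)
    -- true sequential regressions (with outcome missing at random):
    (Q₁ : 𝓦 × ℝ × 𝓩 → ℝ) (Q₂ : 𝓦 × ℝ → ℝ) (ψ : ℝ)
    (hQ₁ : (fun ω => Q₁ (W ω, A ω, Z ω)) =ᵐ[μ]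
      μ[Y | MeasurableSpace.comap (fun ω => (W ω, A ω, Z ω)) inferInstance])
    (hMAR : μ[(fun ω => R ω * (Y ω - Q₁ (W ω, A ω, Z ω))) |
        MeasurableSpace.comap (fun ω => (W ω, A ω, Z ω)) inferInstance] =ᵐ[μ] 0)
    (hQ₂ : (fun ω => Q₂ (W ω, A ω)) =ᵐ[μ]
      μ[(fun ω => Q₁ (W ω, A ω, Z ω)) |
        MeasurableSpace.comap (fun ω => (W ω, A ω)) inferInstance])
    (hψ : ψ = ∫ ω, (Q₂ (W ω, 1) - Q₂ (W ω, 0)) ∂μ)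
    -- arbitrary putative propensity models with values in (0,1):
    (πA' : 𝓦 → ℝ) (πR' : 𝓦 × ℝ × 𝓩 → ℝ)
    (hπA'm : Measurable πA') (hπR'm : Measurable πR')
    -- the estimating function with the true ψ plugged in:
    (D' : Ω → ℝ)
    (hD' : D' = fun ω =>
      (A ω - πA' (W ω)) / (πA' (W ω) * (1 - πA' (W ω))) * (R ω / πR' (W ω, A ω, Z ω)) *
          (Y ω - Q₁ (W ω, A ω, Z ω))
        + (A ω - πA' (W ω)) / (πA' (W ω) * (1 - πA' (W ω))) *
          (Q₁ (W ω, A ω, Z ω) - Q₂ (W ω, A ω))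
        + (Q₂ (W ω, 1) - Q₂ (W ω, 0) - ψ))
    (hDint : Integrable D' μ)
    (hInt₁ : Integrable (fun ω => R ω * (Y ω - Q₁ (W ω, A ω, Z ω))) μ)
    (hInt₂ : Integrable (fun ω => Q₁ (W ω, A ω, Z ω)) μ)
    (hInt₃ : Integrable (fun ω => Q₂ (W ω, 1) - Q₂ (W ω, 0)) μ) :
    ∫ ω, D' ω ∂μ = 0 := by
  set X₁ : Ω → 𝓦 × ℝ × 𝓩 := fun ω => (W ω, A ω, Z ω)
  set X₂ : Ω → 𝓦 × ℝ := fun ω => (W ω, A ω)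
  have hm₁ : MeasurableSpace.comap X₁ inferInstance ≤ ‹MeasurableSpace Ω› :=
    (hW.prodMk (hA.prodMk hZ)).comap_le
  have hm₂₁ : MeasurableSpace.comap X₂ inferInstance ≤ MeasurableSpace.comap X₁ inferInstance :=
    ((measurable_fst.prodMk measurable_snd.fst).comp (comap_measurable X₁)).comap_le
  set h : Ω → ℝ := fun ω => (A ω - πA' (W ω)) / (πA' (W ω) * (1 - πA' (W ω)))
  have hh : StronglyMeasurable[MeasurableSpace.comap X₂ inferInstance] h :=
    ((by fun_prop : Measurable fun p : 𝓦 × ℝ => (p.2 - πA' p.1) / (πA' p.1 * (1 - πA' p.1))).comp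
      (comap_measurable X₂)).stronglyMeasurable
  have hg : StronglyMeasurable[MeasurableSpace.comap X₁ inferInstance]
      (fun ω => h ω / πR' (X₁ ω)) :=
    ((by fun_prop : Measurable fun p : 𝓦 × ℝ × 𝓩 =>
      (p.2.1 - πA' p.1) / (πA' p.1 * (1 - πA' p.1)) / πR' p).comp
      (comap_measurable X₁)).stronglyMeasurable
  have hU := (stronglyMeasurable_condExp.aestronglyMeasurable.congr hQ₁.symm).sub
      ((stronglyMeasurable_condExp.aestronglyMeasurable.congr hQ₂.symm).mono hm₂₁)
  have hU_int := hInt₂.sub (integrable_condExp.congr hQ₂.symm)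
  have hU₀ := condExp_sub_ae_eq_zero (hm₂₁.trans hm₁) hInt₂ hQ₂
  have hc : Integrable (fun ω => Q₂ (W ω, 1) - Q₂ (W ω, 0) - ψ) μ :=
    hInt₃.sub (integrable_const ψ)
  have hD : D' = (fun ω => h ω / πR' (X₁ ω)) * (fun ω => R ω * (Y ω - Q₁ (X₁ ω)))
      + h * (fun ω => Q₁ (X₁ ω) - Q₂ (X₂ ω)) + fun ω => Q₂ (W ω, 1) - Q₂ (W ω, 0) - ψ := by
    rw [hD']; ext ω; simp only [Pi.add_apply, Pi.mul_apply, h, X₁, X₂]; ring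
  have hS := hDint.sub hc
  rw [hD, add_sub_cancel_right] at hS
  have hc₀ : ∫ ω, Q₂ (W ω, 1) - Q₂ (W ω, 0) - ψ ∂μ = 0 := by
    rw [integral_sub hInt₃ (integrable_const ψ), integral_const, ← hψ]
    simp
  rw [hD, integral_add' hS hc, hc₀, add_zero]
  exact integral_mul_add_mul_eq_zero hm₁ hm₂₁ hg hh hInt₁ hMAR hU hU_int hU₀ hS

/-- Robustness condition (i): if the sequential regressions `Q̃₁ = Q₁`, `Q̃₂ = Q₂`
are correctly specified, then `E[D̃(O)] = 0` for arbitrary measurable putative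
propensity models `π̃_A, π̃_R` with values in `(0,1)`. -/
theorem estimating_equation_robust_Q
    (Ω 𝓦 𝓩 : Type*) [MeasurableSpace Ω] [MeasurableSpace 𝓦] [MeasurableSpace 𝓩]
    (μ : Measure Ω) [IsProbabilityMeasure μ]
    (W : Ω → 𝓦) (Z : Ω → 𝓩) (A R Y : Ω → ℝ)
    (hW : Measurable W) (hZ : Measurable Z) (hA : Measurable A)
    (hR : Measurable R) (hY : Measurable Y)
    (hAbin : ∀ ω, A ω = 0 ∨ A ω = 1) (hRbin : ∀ ω, R ω = 0 ∨ R ω = 1)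
    -- true sequential regressions (with outcome missing at random):
    (Q₁ : 𝓦 × ℝ × 𝓩 → ℝ) (Q₂ : 𝓦 × ℝ → ℝ) (ψ : ℝ)
    (hQ₁ : (fun ω => Q₁ (W ω, A ω, Z ω)) =ᵐ[μ]
      μ[Y | MeasurableSpace.comap (fun ω => (W ω, A ω, Z ω)) inferInstance])
    (hMAR : μ[(fun ω => R ω * (Y ω - Q₁ (W ω, A ω, Z ω))) |
        MeasurableSpace.comap (fun ω => (W ω, A ω, Z ω)) inferInstance] =ᵐ[μ] 0)
    (hQ₂ : (fun ω => Q₂ (W ω, A ω)) =ᵐ[μ]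
      μ[(fun ω => Q₁ (W ω, A ω, Z ω)) |
        MeasurableSpace.comap (fun ω => (W ω, A ω)) inferInstance])
    (hψ : ψ = ∫ ω, (Q₂ (W ω, 1) - Q₂ (W ω, 0)) ∂μ)
    -- arbitrary putative propensity models with values in (0,1):
    (πA' : 𝓦 → ℝ) (πR' : 𝓦 × ℝ × 𝓩 → ℝ)
    (hπA'm : Measurable πA') (hπR'm : Measurable πR')
    (hπA'01 : ∀ w, 0 < πA' w ∧ πA' w < 1)
    (hπR'01 : ∀ x, 0 < πR' x ∧ πR' x < 1)
    -- the estimating function with the true ψ plugged in: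
    (D' : Ω → ℝ)
    (hD' : D' = fun ω =>
      (A ω - πA' (W ω)) / (πA' (W ω) * (1 - πA' (W ω))) * (R ω / πR' (W ω, A ω, Z ω)) *
          (Y ω - Q₁ (W ω, A ω, Z ω))
        + (A ω - πA' (W ω)) / (πA' (W ω) * (1 - πA' (W ω))) *
          (Q₁ (W ω, A ω, Z ω) - Q₂ (W ω, A ω))
        + (Q₂ (W ω, 1) - Q₂ (W ω, 0) - ψ))
    (hDint : Integrable D' μ)
    (hInt₁ : Integrable (fun ω => R ω * (Y ω - Q₁ (W ω, A ω, Z ω))) μ)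
    (hInt₂ : Integrable (fun ω => Q₁ (W ω, A ω, Z ω)) μ)
    (hInt₃ : Integrable (fun ω => Q₂ (W ω, 1) - Q₂ (W ω, 0)) μ) :
    ∫ ω, D' ω ∂μ = 0 :=
  estimating_equation_robust_Q_general Ω 𝓦 𝓩 μ W Z A R Y hW hZ hA Q₁ Q₂ ψ hQ₁ hMAR hQ₂ hψ πA' πR'
    hπA'm hπR'm D' hD' hDint hInt₁ hInt₂ hInt₃
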